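/- Improved off-policy lower bound (advantage realignment): For learning policy π_T, behavior policy β_T, and any policy π, with ε^π = max_s |E_{a∼π}[A_{π_T}(s,a)]|, we have J(π) − J(π_T) ≥ (1/(1−γ)) E_{s∼d^{β_T}, a∼β_T(·|s)}[ (π(a|s)/β_T(a|s)) A_{π_T}(s,a) − (2γε^π/(1−γ)) D_TV(β_T‖π)[s] ]. -/

import Mathlib

open Finset

noncomputable section

variable {S A : Type*} [Fintype S] [Fintype A] [DecidableEq S]

/-- A policy assigns a probability distribution over actions to each state. -/
def IsPolicy (p : S → A → ℝ) : Prop :=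
  (∀ s a, 0 ≤ p s a) ∧ ∀ s, ∑ a, p s a = 1

/-- A finite Markov decision process with discount factor `γ ∈ [0,1)`. -/
structure FinMDP (S A : Type*) [Fintype S] [Fintype A] where
  P : S → A → S → ℝ
  P_nonneg : ∀ s a s', 0 ≤ P s a s'
  P_sum : ∀ s a, ∑ s', P s a s' = 1
  r : S → A → ℝ
  μ : S → ℝ
  μ_nonneg : ∀ s, 0 ≤ μ s
  μ_sum : ∑ s, μ s = 1
  γ : ℝ
  γ_nonneg : 0 ≤ γ
  γ_lt_one : γ < 1

/-- One step of the state-distribution evolution under a policy. -/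
def stepDist (M : FinMDP S A) (π : S → A → ℝ) (d : S → ℝ) : S → ℝ :=
  fun s' => ∑ s, ∑ a, d s * π s a * M.P s a s'

/-- Distribution of the state at time `t`, starting from `μ`, following `π`. -/
def stateDist (M : FinMDP S A) (π : S → A → ℝ) : ℕ → S → ℝ
  | 0 => M.μ
  | t + 1 => stepDist M π (stateDist M π t)

/-- Expected discounted return `J(π)` with initial distribution `μ`. -/
def Jret (M : FinMDP S A) (π : S → A → ℝ) : ℝ :=
  ∑' t : ℕ, M.γ ^ t * ∑ s, stateDist M π t s * ∑ a, π s a * M.r s a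

/-- Discounted future state visitation distribution `d^π`. -/
def dVisit (M : FinMDP S A) (π : S → A → ℝ) (s : S) : ℝ :=
  (1 - M.γ) * ∑' t : ℕ, M.γ ^ t * stateDist M π t s

/-- Distribution of the state at time `t` starting deterministically from `s₀`. -/
def stateDistFrom (M : FinMDP S A) (π : S → A → ℝ) (s₀ : S) : ℕ → S → ℝ
  | 0 => fun s => if s = s₀ then 1 else 0
  | t + 1 => stepDist M π (stateDistFrom M π s₀ t)

/-- State value function `V_π(s₀)`: expected discounted return starting from `s₀`. -/
def Vval (M : FinMDP S A) (π : S → A → ℝ) (s₀ : S) : ℝ :=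
  ∑' t : ℕ, M.γ ^ t * ∑ s, stateDistFrom M π s₀ t s * ∑ a, π s a * M.r s a

/-- State-action value function `Q_π(s,a)`. -/
def Qval (M : FinMDP S A) (π : S → A → ℝ) (s : S) (a : A) : ℝ :=
  M.r s a + M.γ * ∑ s', M.P s a s' * Vval M π s'

/-- Advantage function `A_π(s,a) = Q_π(s,a) - V_π(s)`. -/
def Adv (M : FinMDP S A) (π : S → A → ℝ) (s : S) (a : A) : ℝ :=
  Qval M π s a - Vval M π s

/-- Total variation distance between two distributions over actions. -/
def DTV (p q : A → ℝ) : ℝ := (1 / 2) * ∑ a, |p a - q a|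

/-- KL divergence between two distributions over actions. -/
def DKL (p q : A → ℝ) : ℝ := ∑ a, p a * Real.log (p a / q a)

end

/-! The performance-difference identity
`(1 - γ) (J(π) - J(π_T)) = ∑ₛ d^π(s) E_{a∼π} A_{π_T}(s,a)` comes from pairing the fixed-point
equation `d^π = (1 - γ) μ + γ P_π^⊤ d^π` of the visitation distribution with `V_{π_T}`, since
`Q_{π_T} = r + γ P V_{π_T}`; no Bellman equation is needed. Replacing `d^π` by `d^{β_T}` costs
at most `ε^π ‖d^π - d^{β_T}‖₁`, and subtracting the fixed-point equations of `d^π` and `d^{β_T}`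
gives `(1 - γ) ‖d^π - d^{β_T}‖₁ ≤ 2γ E_{s∼d^{β_T}} D_TV(β_T‖π)[s]`. Finally the importance
weight turns `E_{a∼β_T}[(π/β_T) A_{π_T}]` into `E_{a∼π}[A_{π_T}]`. -/

section

variable {ι : Type*} [Fintype ι]

lemma summable_geometric_mul_of_abs_le {γ C : ℝ} (h0 : 0 ≤ γ) (h1 : γ < 1) {f : ℕ → ℝ}
    (hf : ∀ t, |f t| ≤ C) : Summable fun t => γ ^ t * f t := by
  refine ((summable_geometric_of_lt_one h0 h1).mul_left C).of_norm_bounded fun t => ?_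
  rw [Real.norm_eq_abs, abs_mul, abs_of_nonneg (pow_nonneg h0 t), mul_comm]
  exact mul_le_mul_of_nonneg_right (hf t) (pow_nonneg h0 t)

lemma le_one_of_sum_eq_one {ρ : ι → ℝ} (h0 : ∀ i, 0 ≤ ρ i) (h : ∑ i, ρ i = 1) (i : ι) :
    ρ i ≤ 1 :=
  h ▸ single_le_sum (fun j _ => h0 j) (mem_univ i)

lemma abs_sum_mul_le_sum_abs {ρ f : ι → ℝ} (h0 : ∀ i, 0 ≤ ρ i) (h1 : ∀ i, ρ i ≤ 1) :
    |∑ i, ρ i * f i| ≤ ∑ i, |f i| :=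
  (abs_sum_le_sum_abs _ _).trans <| sum_le_sum fun i _ => by
    rw [abs_mul, abs_of_nonneg (h0 i)]
    exact mul_le_of_le_one_left (abs_nonneg _) (h1 i)

lemma summable_geometric_mul_sum_mul {γ : ℝ} (h0 : 0 ≤ γ) (h1 : γ < 1) {ρ : ℕ → ι → ℝ}
    (hρ0 : ∀ t i, 0 ≤ ρ t i) (hρ1 : ∀ t i, ρ t i ≤ 1) (f : ι → ℝ) :
    Summable fun t => γ ^ t * ∑ i, ρ t i * f i :=
  summable_geometric_mul_of_abs_le h0 h1 fun t => abs_sum_mul_le_sum_abs (hρ0 t) (hρ1 t)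

lemma sum_mul_sub_sum_mul_le (d₁ d₂ g : ι → ℝ) {ε : ℝ} (hg : ∀ i, |g i| ≤ ε) :
    ∑ i, d₂ i * g i - ∑ i, d₁ i * g i ≤ ε * ∑ i, |d₁ i - d₂ i| := by
  rw [← sum_sub_distrib, mul_sum]
  refine sum_le_sum fun i _ => ?_
  calc d₂ i * g i - d₁ i * g i = -((d₁ i - d₂ i) * g i) := by ring
    _ ≤ |(d₁ i - d₂ i) * g i| := neg_le_abs _
    _ ≤ ε * |d₁ i - d₂ i| := by
      rw [abs_mul, mul_comm]
      exact mul_le_mul_of_nonneg_right (hg i) (abs_nonneg _)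

lemma sum_importance_weight {β π x : ι → ℝ} (hβ : ∀ i, 0 < β i) (hβ1 : ∑ i, β i = 1) (c : ℝ) :
    ∑ i, β i * (π i / β i * x i - c) = ∑ i, π i * x i - c := by
  have hw : ∀ i, β i * (π i / β i * x i - c) = π i * x i - β i * c := fun i => by
    rw [mul_sub, ← mul_assoc, mul_div_cancel₀ _ (hβ i).ne']
  simp only [hw, sum_sub_distrib, ← sum_mul, hβ1, one_mul]

end

section

variable {S A : Type*} [Fintype S] [Fintype A] (M : FinMDP S A) {p π β : S → A → ℝ}

def policyTransition (p : S → A → ℝ) (s s' : S) : ℝ := ∑ a, p s a * M.P s a s'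

lemma policyTransition_nonneg (hp : IsPolicy p) (s s' : S) : 0 ≤ policyTransition M p s s' :=
  sum_nonneg fun a _ => mul_nonneg (hp.1 s a) (M.P_nonneg s a s')

lemma sum_policyTransition (hp : IsPolicy p) (s : S) : ∑ s', policyTransition M p s s' = 1 := by
  simp only [policyTransition]
  rw [sum_comm]
  simp only [← mul_sum, M.P_sum, mul_one, hp.2 s]

lemma stepDist_eq_sum (p : S → A → ℝ) (d : S → ℝ) (s' : S) :
    stepDist M p d s' = ∑ s, d s * policyTransition M p s s' := by
  simp only [stepDist, policyTransition, mul_sum, mul_assoc]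

lemma stepDist_nonneg (hp : IsPolicy p) {d : S → ℝ} (hd : ∀ s, 0 ≤ d s) (s' : S) :
    0 ≤ stepDist M p d s' := by
  rw [stepDist_eq_sum]
  exact sum_nonneg fun s _ => mul_nonneg (hd s) (policyTransition_nonneg M hp s s')

lemma sum_stepDist (hp : IsPolicy p) (d : S → ℝ) : ∑ s', stepDist M p d s' = ∑ s, d s := by
  simp only [stepDist_eq_sum]
  rw [sum_comm]
  simp only [← mul_sum, sum_policyTransition M hp, mul_one]

lemma sum_stepDist_mul (p : S → A → ℝ) (d V : S → ℝ) :
    ∑ s', stepDist M p d s' * V s' = ∑ s, d s * ∑ s', policyTransition M p s s' * V s' := by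
  simp only [stepDist_eq_sum, sum_mul, mul_sum, mul_assoc]
  exact sum_comm

lemma stepDist_sub (p : S → A → ℝ) (d₁ d₂ : S → ℝ) (s' : S) :
    stepDist M p (d₁ - d₂) s' = stepDist M p d₁ s' - stepDist M p d₂ s' := by
  simp only [stepDist_eq_sum, Pi.sub_apply, sub_mul, sum_sub_distrib]

lemma sum_abs_stepDist_le (hp : IsPolicy p) (d : S → ℝ) :
    ∑ s', |stepDist M p d s'| ≤ ∑ s, |d s| :=
  calc ∑ s', |stepDist M p d s'| ≤ ∑ s', ∑ s, |d s| * policyTransition M p s s' := by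
        gcongr with s'
        rw [stepDist_eq_sum]
        refine (abs_sum_le_sum_abs _ _).trans_eq (sum_congr rfl fun s _ => ?_)
        rw [abs_mul, abs_of_nonneg (policyTransition_nonneg M hp s s')]
    _ = ∑ s, |d s| := by
        rw [sum_comm]
        simp only [← mul_sum, sum_policyTransition M hp, mul_one]

lemma sum_abs_stepDist_sub_stepDist_le {d : S → ℝ} (hd : ∀ s, 0 ≤ d s) :
    ∑ s', |stepDist M π d s' - stepDist M β d s'| ≤ 2 * ∑ s, d s * DTV (β s) (π s) :=
  calc ∑ s', |stepDist M π d s' - stepDist M β d s'|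
      = ∑ s', |∑ s, ∑ a, d s * (π s a - β s a) * M.P s a s'| := by
        simp only [stepDist, ← sum_sub_distrib, mul_sub, sub_mul]
    _ ≤ ∑ s', ∑ s, ∑ a, d s * |π s a - β s a| * M.P s a s' := by
        gcongr with s'
        refine (abs_sum_le_sum_abs _ _).trans (sum_le_sum fun s _ => ?_)
        refine (abs_sum_le_sum_abs _ _).trans_eq (sum_congr rfl fun a _ => ?_)
        rw [abs_mul, abs_mul, abs_of_nonneg (hd s), abs_of_nonneg (M.P_nonneg s a s')]
    _ = ∑ s, d s * ∑ a, |β s a - π s a| := by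
        rw [sum_comm]
        refine sum_congr rfl fun s _ => ?_
        rw [sum_comm, mul_sum]
        simp only [← mul_sum, M.P_sum, mul_one, abs_sub_comm (π s _)]
    _ = 2 * ∑ s, d s * DTV (β s) (π s) := by
        rw [mul_sum]
        exact sum_congr rfl fun s _ => by rw [DTV]; ring

lemma stateDist_nonneg (hp : IsPolicy p) (t : ℕ) (s : S) : 0 ≤ stateDist M p t s := by
  induction t generalizing s with
  | zero => exact M.μ_nonneg s
  | succ t ih => exact stepDist_nonneg M hp ih s

lemma sum_stateDist (hp : IsPolicy p) (t : ℕ) : ∑ s, stateDist M p t s = 1 := by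
  induction t with
  | zero => exact M.μ_sum
  | succ t ih => rw [stateDist, sum_stepDist M hp, ih]

lemma stateDist_le_one (hp : IsPolicy p) (t : ℕ) (s : S) : stateDist M p t s ≤ 1 :=
  le_one_of_sum_eq_one (stateDist_nonneg M hp t) (sum_stateDist M hp t) s

lemma dVisit_nonneg (hp : IsPolicy p) (s : S) : 0 ≤ dVisit M p s :=
  mul_nonneg (sub_nonneg.2 M.γ_lt_one.le) <|
    tsum_nonneg fun t => mul_nonneg (pow_nonneg M.γ_nonneg t) (stateDist_nonneg M hp t s)

lemma summable_geometric_mul_stateDist (hp : IsPolicy p) (s : S) :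
    Summable fun t => M.γ ^ t * stateDist M p t s :=
  summable_geometric_mul_of_abs_le M.γ_nonneg M.γ_lt_one fun t => by
    rw [abs_of_nonneg (stateDist_nonneg M hp t s)]
    exact stateDist_le_one M hp t s

lemma sum_dVisit_mul (hp : IsPolicy p) (f : S → ℝ) :
    ∑ s, dVisit M p s * f s = (1 - M.γ) * ∑' t, M.γ ^ t * ∑ s, stateDist M p t s * f s := by
  have hs : ∀ s, Summable fun t => M.γ ^ t * (stateDist M p t s * f s) := fun s => by
    simpa only [mul_assoc] using (summable_geometric_mul_stateDist M hp s).mul_right (f s)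
  simp only [dVisit, mul_assoc, ← mul_sum, ← tsum_mul_right]
  rw [← Summable.tsum_finsetSum fun s _ => hs s]
  simp only [mul_sum]

lemma dVisit_eq_add_stepDist (hp : IsPolicy p) (s' : S) :
    dVisit M p s' = (1 - M.γ) * M.μ s' + M.γ * stepDist M p (dVisit M p) s' := by
  have hstep : stepDist M p (dVisit M p) s'
      = (1 - M.γ) * ∑' t, M.γ ^ t * stateDist M p (t + 1) s' := by
    rw [stepDist_eq_sum, sum_dVisit_mul M hp]
    simp only [stateDist, stepDist_eq_sum]
  rw [hstep, dVisit, (summable_geometric_mul_stateDist M hp s').tsum_eq_zero_add]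
  simp only [pow_succ, mul_right_comm _ M.γ, tsum_mul_right, pow_zero, one_mul, stateDist]
  ring

lemma sum_abs_dVisit_sub_le (hπ : IsPolicy π) (hβ : IsPolicy β) :
    (1 - M.γ) * ∑ s, |dVisit M π s - dVisit M β s|
      ≤ 2 * M.γ * ∑ s, dVisit M β s * DTV (β s) (π s) := by
  set Δ := dVisit M π - dVisit M β
  have hΔ : ∀ s, Δ s = M.γ * (stepDist M π Δ s
      + (stepDist M π (dVisit M β) s - stepDist M β (dVisit M β) s)) := fun s => by
    simp only [Δ, stepDist_sub, Pi.sub_apply]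
    rw [dVisit_eq_add_stepDist M hπ s, dVisit_eq_add_stepDist M hβ s]
    ring
  have hcontract : ∑ s, |Δ s|
      ≤ M.γ * (∑ s, |Δ s| + 2 * ∑ s, dVisit M β s * DTV (β s) (π s)) :=
    calc ∑ s, |Δ s| ≤ M.γ * ∑ s, (|stepDist M π Δ s|
          + |stepDist M π (dVisit M β) s - stepDist M β (dVisit M β) s|) := by
          rw [mul_sum]
          refine sum_le_sum fun s _ => ?_
          rw [hΔ s, abs_mul, abs_of_nonneg M.γ_nonneg]
          exact mul_le_mul_of_nonneg_left (abs_add_le _ _) M.γ_nonneg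
      _ ≤ _ := by
          rw [sum_add_distrib]
          exact mul_le_mul_of_nonneg_left (add_le_add (sum_abs_stepDist_le M hπ Δ)
            (sum_abs_stepDist_sub_stepDist_le M (dVisit_nonneg M hβ))) M.γ_nonneg
  change (1 - M.γ) * ∑ s, |Δ s| ≤ _
  linarith

section

variable [DecidableEq S]

lemma stateDistFrom_nonneg (hp : IsPolicy p) (s₀ : S) (t : ℕ) (s : S) :
    0 ≤ stateDistFrom M p s₀ t s := by
  induction t generalizing s with
  | zero => unfold stateDistFrom; positivity
  | succ t ih => exact stepDist_nonneg M hp ih s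

lemma sum_stateDistFrom (hp : IsPolicy p) (s₀ : S) (t : ℕ) :
    ∑ s, stateDistFrom M p s₀ t s = 1 := by
  induction t with
  | zero => simp [stateDistFrom]
  | succ t ih => rw [stateDistFrom, sum_stepDist M hp, ih]

lemma stateDist_eq_sum_stateDistFrom (p : S → A → ℝ) (t : ℕ) (s : S) :
    stateDist M p t s = ∑ s₀, M.μ s₀ * stateDistFrom M p s₀ t s := by
  induction t generalizing s with
  | zero => simp [stateDist, stateDistFrom]
  | succ t ih =>
    simp only [stateDist, stateDistFrom, stepDist_eq_sum, ih, sum_mul, mul_sum, mul_assoc]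
    exact sum_comm

lemma Jret_eq_sum_Vval (hp : IsPolicy p) : Jret M p = ∑ s₀, M.μ s₀ * Vval M p s₀ := by
  set r : S → ℝ := fun s => ∑ a, p s a * M.r s a
  have hsplit : ∀ t, M.γ ^ t * ∑ s, stateDist M p t s * r s
      = ∑ s₀, M.μ s₀ * (M.γ ^ t * ∑ s, stateDistFrom M p s₀ t s * r s) := fun t => by
    simp only [stateDist_eq_sum_stateDistFrom, sum_mul, mul_sum]
    rw [sum_comm]
    exact sum_congr rfl fun _ _ => sum_congr rfl fun _ _ => by ring
  have hsum : ∀ s₀, Summable fun t => M.γ ^ t * ∑ s, stateDistFrom M p s₀ t s * r s :=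
    fun s₀ => summable_geometric_mul_sum_mul M.γ_nonneg M.γ_lt_one
      (stateDistFrom_nonneg M hp s₀)
      (fun t => le_one_of_sum_eq_one (stateDistFrom_nonneg M hp s₀ t)
        (sum_stateDistFrom M hp s₀ t)) r
  rw [Jret, tsum_congr hsplit, Summable.tsum_finsetSum fun s₀ _ => (hsum s₀).mul_left _]
  exact sum_congr rfl fun _ _ => tsum_mul_left

lemma sum_mul_Adv (hπ : IsPolicy π) (πT : S → A → ℝ) (s : S) :
    ∑ a, π s a * Adv M πT s a = ∑ a, π s a * M.r s a
      + M.γ * ∑ s', policyTransition M π s s' * Vval M πT s' - Vval M πT s := by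
  have hP : ∑ a, π s a * (M.γ * ∑ s', M.P s a s' * Vval M πT s')
      = M.γ * ∑ s', policyTransition M π s s' * Vval M πT s' := by
    simp only [policyTransition, mul_sum, sum_mul]
    rw [sum_comm]
    exact sum_congr rfl fun _ _ => sum_congr rfl fun _ _ => by ring
  simp only [Adv, Qval, mul_sub, mul_add, sum_sub_distrib, sum_add_distrib, hP, ← sum_mul,
    hπ.2 s, one_mul]

lemma sum_dVisit_mul_sum_mul_Adv {πT : S → A → ℝ} (hπT : IsPolicy πT) (hπ : IsPolicy π) :
    ∑ s, dVisit M π s * ∑ a, π s a * Adv M πT s a = (1 - M.γ) * (Jret M π - Jret M πT) := by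
  have hJ : ∑ s, dVisit M π s * ∑ a, π s a * M.r s a = (1 - M.γ) * Jret M π :=
    sum_dVisit_mul M hπ _
  have hV : ∑ s, dVisit M π s * Vval M πT s = (1 - M.γ) * ∑ s, M.μ s * Vval M πT s
      + M.γ * ∑ s, stepDist M π (dVisit M π) s * Vval M πT s := by
    rw [mul_sum, mul_sum, ← sum_add_distrib]
    exact sum_congr rfl fun s _ => by rw [dVisit_eq_add_stepDist M hπ s]; ring
  have hstep : ∑ s, dVisit M π s * (M.γ * ∑ s', policyTransition M π s s' * Vval M πT s')
      = M.γ * ∑ s, stepDist M π (dVisit M π) s * Vval M πT s := by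
    rw [sum_stepDist_mul, mul_sum]
    exact sum_congr rfl fun _ _ => mul_left_comm _ _ _
  simp only [sum_mul_Adv M hπ, mul_sub, mul_add, sum_sub_distrib, sum_add_distrib, hJ, hstep, hV,
    Jret_eq_sum_Vval M hπT]
  ring

end

end

variable {S A : Type*} [Fintype S] [Fintype A] [DecidableEq S]

/-- Improved off-policy lower bound with advantage realignment. -/
theorem offpolicy_lower_bound_realigned [Nonempty S] (M : FinMDP S A)
    (πT βT π : S → A → ℝ)
    (hπT : IsPolicy πT) (hβT : IsPolicy βT) (hπ : IsPolicy π)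
    (hβpos : ∀ s a, 0 < βT s a) :
    Jret M π - Jret M πT ≥
      (1 / (1 - M.γ)) * ∑ s, dVisit M βT s * ∑ a, βT s a *
        (π s a / βT s a * Adv M πT s a
          - 2 * M.γ * (univ.sup' univ_nonempty fun s' => |∑ b, π s' b * Adv M πT s' b|)
              / (1 - M.γ) * DTV (βT s) (π s)) := by
  have hγ : 0 < 1 - M.γ := sub_pos.2 M.γ_lt_one
  set ε := univ.sup' univ_nonempty fun s' => |∑ b, π s' b * Adv M πT s' b|
  have hg : ∀ s, |∑ b, π s b * Adv M πT s b| ≤ ε := fun s =>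
    le_sup' (fun s' => |∑ b, π s' b * Adv M πT s' b|) (mem_univ s)
  have hε : 0 ≤ ε := (abs_nonneg _).trans (hg (Classical.arbitrary S))
  set W := ∑ s, dVisit M βT s * DTV (βT s) (π s)
  have hrealign : ∑ s, dVisit M βT s * ∑ a, βT s a * (π s a / βT s a * Adv M πT s a
        - 2 * M.γ * ε / (1 - M.γ) * DTV (βT s) (π s))
      = ∑ s, dVisit M βT s * ∑ b, π s b * Adv M πT s b - 2 * M.γ * ε / (1 - M.γ) * W := by
    rw [mul_sum, ← sum_sub_distrib]
    refine sum_congr rfl fun s _ => ?_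
    rw [sum_importance_weight (hβpos s) (hβT.2 s)]
    ring
  have hshift := sum_mul_sub_sum_mul_le (dVisit M π) (dVisit M βT) _ hg
  have hdist := sum_abs_dVisit_sub_le M hπ hβT
  have hpd := sum_dVisit_mul_sum_mul_Adv M hπT hπ
  have hcost : ε * ∑ s, |dVisit M π s - dVisit M βT s| ≤ 2 * M.γ * ε / (1 - M.γ) * W := by
    rw [div_mul_eq_mul_div, le_div_iff₀ hγ]
    nlinarith
  rw [ge_iff_le, hrealign, one_div_mul_eq_div, div_le_iff₀ hγ]
  linarith
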